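/- arXiv:2502.09892 — 5 statements merged into one kernel-verified Lean document; each statement's English description precedes it below -/
import Mathlib

section
/- Let K be a number field, let d ∈ O_K \ {0} be 5-th power free, let p be a rational prime, and let (a, b, c) ∈ O_K³ be a nontrivial primitive solution of the equation a⁵ + b⁵ = d·c^p. Then a, b, c are pairwise coprime, i.e., the ideals (a)+(b), (b)+(c), and (a)+(c) all equal O_K. -/
/-!
A prime containing two of `a, b, c` contains the third: for `(b, c)` and `(a, c)` this is read
off the equation, and for `(a, b)` a prime `𝔮 ∋ a, b` gives `𝔮⁵ ∣ d·cᵖ`, which forces `𝔮 ∣ c`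
because `𝔮⁵ ∤ d`. So the third entry lies in the radical of the ideal generated by the other
two, and primitivity makes that radical, hence the ideal itself, the unit ideal.
-/

open IsDedekindDomain NumberField

-- The additive `P`-adic valuation on a number field `F`, normalized so that a uniformizer
-- has valuation `1`; by convention `vP P 0 = 0`.
open scoped Classical in
noncomputable def vP {F : Type*} [Field F] [NumberField F]
    (P : HeightOneSpectrum (𝓞 F)) (x : F) : ℤ :=
  if hx : x = 0 then 0
  else - Multiplicative.toAdd (WithZero.unzero ((Valuation.ne_zero_iff (P.valuation F)).mpr hx))

-- A number field is totally real if all its infinite places are real.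
def TotallyReal (F : Type*) [Field F] [NumberField F] : Prop :=
  ∀ v : NumberField.InfinitePlace F, v.IsReal

theorem Ideal.span_eq_top_of_span_insert_eq_top_of_mem_radical {R : Type*} [CommRing R]
    {s : Set R} {z : R} (htop : Ideal.span (insert z s) = ⊤) (hz : z ∈ (Ideal.span s).radical) :
    Ideal.span s = ⊤ := by
  rw [← Ideal.radical_eq_top, eq_top_iff, ← htop, Ideal.span_insert]
  exact sup_le ((Ideal.span_singleton_le_iff_mem _).mpr hz) Ideal.le_radical

theorem Ideal.mem_radical_span_pair_of_add_pow_eq {R : Type*} [CommRing R] {x y z d : R}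
    {m n k : ℕ} (hn : n ≠ 0) (hk : k ≠ 0) (h : x ^ m + y ^ n = d * z ^ k) :
    x ∈ (Ideal.span {y, z}).radical := ⟨m, by
  rw [eq_sub_of_add_eq h]
  exact sub_mem (Ideal.mul_mem_left _ _ (Ideal.pow_mem_of_mem _ (subset_span (by simp)) k hk.pos))
    (Ideal.pow_mem_of_mem _ (subset_span (by simp)) n hn.pos)⟩

theorem IsDedekindDomain.HeightOneSpectrum.mem_of_mul_mem_pow_of_not_pow_dvd {R : Type*}
    [CommRing R] [IsDedekindDomain R] (v : HeightOneSpectrum R) {n : ℕ} {d y : R}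
    (hd : ¬ v.asIdeal ^ n ∣ Ideal.span {d}) (h : d * y ∈ v.asIdeal ^ n) : y ∈ v.asIdeal := by
  by_contra hy
  have hv : ¬ v.asIdeal ∣ Ideal.span {y} := by
    rwa [Ideal.dvd_span_singleton]
  refine hd (v.prime.pow_dvd_of_dvd_mul_right n hv ?_)
  rwa [Ideal.span_singleton_mul_span_singleton, Ideal.dvd_span_singleton]

theorem IsDedekindDomain.mem_radical_span_pair_of_add_pow_eq_of_not_pow_dvd {R : Type*}
    [CommRing R] [IsDedekindDomain R] {x y z d : R} {n k : ℕ} (hx : x ≠ 0)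
    (hd : ∀ v : HeightOneSpectrum R, ¬ v.asIdeal ^ n ∣ Ideal.span {d})
    (h : x ^ n + y ^ n = d * z ^ k) : z ∈ (Ideal.span {x, y}).radical := by
  rw [Ideal.radical_eq_sInf, Submodule.mem_sInf]
  rintro 𝔮 ⟨hxy, h𝔮⟩
  have hx𝔮 : x ∈ 𝔮 := hxy (Ideal.subset_span (by simp))
  have hy𝔮 : y ∈ 𝔮 := hxy (Ideal.subset_span (by simp))
  have hne : 𝔮 ≠ ⊥ := fun h ↦ hx (by simpa [h] using hx𝔮)
  have hdz : d * z ^ k ∈ 𝔮 ^ n := h ▸ add_mem (Ideal.pow_mem_pow hx𝔮 n) (Ideal.pow_mem_pow hy𝔮 n)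
  exact h𝔮.mem_of_pow_mem k <|
    HeightOneSpectrum.mem_of_mul_mem_pow_of_not_pow_dvd ⟨𝔮, h𝔮, hne⟩ (hd _) hdz

theorem pairwise_coprime_of_primitive_general
    (K : Type*) [Field K] [NumberField K]
    (d : 𝓞 K)
    -- `d` is 5-th power free
    (hd5 : ∀ q : HeightOneSpectrum (𝓞 K), ¬ q.asIdeal ^ 5 ∣ Ideal.span {d})
    (p : ℕ) (hp : p.Prime)
    (a b c : 𝓞 K)
    (heq : a ^ 5 + b ^ 5 = d * c ^ p)
    (hnt : a * b * c ≠ 0)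
    (hprim : Ideal.span {a, b, c} = ⊤) :
    Ideal.span {a, b} = ⊤ ∧ Ideal.span {b, c} = ⊤ ∧ Ideal.span {a, c} = ⊤ := by
  have hc_rad : c ∈ (Ideal.span {a, b}).radical :=
    mem_radical_span_pair_of_add_pow_eq_of_not_pow_dvd
      (left_ne_zero_of_mul (left_ne_zero_of_mul hnt)) hd5 heq
  have ha_rad : a ∈ (Ideal.span {b, c}).radical :=
    Ideal.mem_radical_span_pair_of_add_pow_eq (by norm_num) hp.ne_zero heq
  have hb_rad : b ∈ (Ideal.span {a, c}).radical :=
    Ideal.mem_radical_span_pair_of_add_pow_eq (by norm_num) hp.ne_zero ((add_comm _ _).trans heq)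
  refine ⟨?_, ?_, ?_⟩
  · refine Ideal.span_eq_top_of_span_insert_eq_top_of_mem_radical ?_ hc_rad
    rwa [Set.insert_comm c a, Set.pair_comm c b]
  · exact Ideal.span_eq_top_of_span_insert_eq_top_of_mem_radical hprim ha_rad
  · refine Ideal.span_eq_top_of_span_insert_eq_top_of_mem_radical ?_ hb_rad
    rwa [Set.insert_comm a b] at hprim

/-- Remark 2.6 of the paper: for a 5-th power free `d`, the entries of a
nontrivial primitive solution of `a⁵ + b⁵ = d·c^p` are pairwise coprime. -/
theorem pairwise_coprime_of_primitive
    (K : Type*) [Field K] [NumberField K]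
    (d : 𝓞 K) (hd0 : d ≠ 0)
    -- `d` is 5-th power free
    (hd5 : ∀ q : HeightOneSpectrum (𝓞 K), ¬ q.asIdeal ^ 5 ∣ Ideal.span {d})
    (p : ℕ) (hp : p.Prime)
    (a b c : 𝓞 K)
    (heq : a ^ 5 + b ^ 5 = d * c ^ p)
    (hnt : a * b * c ≠ 0)
    (hprim : Ideal.span {a, b, c} = ⊤) :
    Ideal.span {a, b} = ⊤ ∧ Ideal.span {b, c} = ⊤ ∧ Ideal.span {a, c} = ⊤ :=
  pairwise_coprime_of_primitive_general K d hd5 p hp a b c heq hnt hprim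
end

section
/- Let K be a totally real number field, r ≥ 5 and p ≥ 5 rational primes, d ∈ O_K \ {0}, and let L = K(ζ_r) where ζ_r is a primitive r-th root of unity. Let (a, b, c) ∈ O_L³ be a nontrivial primitive solution of a^r + b^r = d·c^p. Then for any 0 ≤ i < j ≤ r − 1, every prime ideal q of O_L dividing both a + ζ_r^i·b and a + ζ_r^j·b satisfies q | r·d; equivalently, a + ζ_r^i·b and a + ζ_r^j·b are coprime outside S_{L,rd}. -/
open IsDedekindDomain NumberField

/-! A prime `q` containing `a + ζ^i b` and `a + ζ^j b` contains `(ζ^j - ζ^i) b`. Either it contains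
`ζ^j - ζ^i = ζ^i (ζ^(j-i) - 1)`, which divides `r` since `η - 1` divides `r` for every `r`-th root
of unity `η ≠ 1`; or it contains `b`, hence `a`, hence `d c^p`, and primitivity keeps `c` out of
`q`, so `d ∈ q`. -/

theorem IsPrimitiveRoot.pow_sub_pow_dvd_natCast {A : Type*} [CommRing A] [IsDomain A] {ζ : A}
    {n i j : ℕ} (hζ : IsPrimitiveRoot ζ n) (hij : i < j) (hjn : j < n) :
    ζ ^ j - ζ ^ i ∣ (n : A) := by
  have hfactor : ζ ^ j - ζ ^ i = ζ ^ i * (ζ ^ (j - i) - 1) := by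
    rw [mul_sub, mul_one, ← pow_add, Nat.add_sub_cancel' hij.le]
  rw [hfactor, ((hζ.isUnit (by omega)).pow i).mul_left_dvd]
  refine sub_one_dvd_natCast_of_pow_eq_one ?_ (hζ.pow_ne_one_of_pos_of_lt (by omega) (by omega))
  rw [← pow_mul, mul_comm, pow_mul, hζ.pow_eq_one, one_pow]

theorem Ideal.IsPrime.sub_mem_or_mem_and_mem {R : Type*} [CommRing R] {P : Ideal R}
    (hP : P.IsPrime) {x y u v : R} (hu : x + u * y ∈ P) (hv : x + v * y ∈ P) :
    v - u ∈ P ∨ x ∈ P ∧ y ∈ P := by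
  have hdiff : (v - u) * y ∈ P := by
    convert P.sub_mem hv hu using 1
    ring
  refine (hP.mem_or_mem hdiff).imp_right fun hy ↦ ⟨?_, hy⟩
  simpa using P.sub_mem hu (P.mul_mem_left u hy)

theorem Ideal.IsPrime.mem_of_add_pow_eq_mul_pow {R : Type*} [CommRing R] {P : Ideal R}
    (hP : P.IsPrime) {a b c d : R} {m n : ℕ} (hm : m ≠ 0) (heq : a ^ m + b ^ m = d * c ^ n)
    (hprim : Ideal.span {a, b, c} = ⊤) (ha : a ∈ P) (hb : b ∈ P) : d ∈ P := by
  have hdc : d * c ^ n ∈ P := heq ▸ P.add_mem (P.pow_mem_of_mem ha m (by omega))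
    (P.pow_mem_of_mem hb m (by omega))
  refine (hP.mem_or_mem hdc).resolve_right fun hc ↦ hP.ne_top ?_
  rw [eq_top_iff, ← hprim, Ideal.span_le]
  rintro x (rfl | rfl | rfl)
  exacts [ha, hb, hP.mem_of_pow_mem n hc]

theorem coprime_outside_S_L_rd_general
    (r : ℕ)
    (p : ℕ)
    -- `L = K(ζ_r)` where `ζ` is a primitive `r`-th root of unity
    (L : Type*) [Field L] [NumberField L]
    (ζ : L) (hζ : IsPrimitiveRoot ζ r)
    -- `ζI` is `ζ` as an element of `𝓞 L`, `dL` is the image of `d` in `𝓞 L`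
    (ζI : 𝓞 L) (hζI : (ζI : L) = ζ)
    (dL : 𝓞 L)
    -- `(a, b, c)` is a nontrivial primitive solution of `a^r + b^r = d·c^p` in `𝓞 L`
    (a b c : 𝓞 L)
    (heq : a ^ r + b ^ r = dL * c ^ p)
    (hprim : Ideal.span {a, b, c} = ⊤) :
    ∀ i j : ℕ, i < j → j ≤ r - 1 →
      ∀ q : HeightOneSpectrum (𝓞 L),
        a + ζI ^ i * b ∈ q.asIdeal → a + ζI ^ j * b ∈ q.asIdeal →
          (r : 𝓞 L) * dL ∈ q.asIdeal := by
  intro i j hij hjr q hqi hqj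
  have hζI_prim : IsPrimitiveRoot ζI r :=
    .of_map_of_injective (f := algebraMap (𝓞 L) L) (hζI ▸ hζ : IsPrimitiveRoot (ζI : L) r)
      RingOfIntegers.coe_injective
  rcases q.isPrime.sub_mem_or_mem_and_mem hqi hqj with hζq | ⟨ha, hb⟩
  · obtain ⟨t, ht⟩ := hζI_prim.pow_sub_pow_dvd_natCast hij (by omega)
    exact q.asIdeal.mul_mem_right _ (ht ▸ q.asIdeal.mul_mem_right t hζq)
  · exact q.asIdeal.mul_mem_left _
      (q.isPrime.mem_of_add_pow_eq_mul_pow (by omega) heq hprim ha hb)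

/-- Lemma 3.3 of the paper. -/
theorem coprime_outside_S_L_rd
    (K : Type*) [Field K] [NumberField K] (hK : TotallyReal K)
    (r : ℕ) (hr : r.Prime) (hr5 : 5 ≤ r)
    (p : ℕ) (hp : p.Prime) (hp5 : 5 ≤ p)
    (d : 𝓞 K) (hd0 : d ≠ 0)
    -- `L = K(ζ_r)` where `ζ` is a primitive `r`-th root of unity
    (L : Type*) [Field L] [NumberField L] [Algebra K L]
    (ζ : L) (hζ : IsPrimitiveRoot ζ r)
    (hL : IntermediateField.adjoin K {ζ} = ⊤)
    -- `ζI` is `ζ` as an element of `𝓞 L`, `dL` is the image of `d` in `𝓞 L`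
    (ζI : 𝓞 L) (hζI : (ζI : L) = ζ)
    (dL : 𝓞 L) (hdL : (dL : L) = algebraMap K L (d : K))
    -- `(a, b, c)` is a nontrivial primitive solution of `a^r + b^r = d·c^p` in `𝓞 L`
    (a b c : 𝓞 L)
    (heq : a ^ r + b ^ r = dL * c ^ p)
    (hnt : a * b * c ≠ 0)
    (hprim : Ideal.span {a, b, c} = ⊤) :
    ∀ i j : ℕ, i < j → j ≤ r - 1 →
      ∀ q : HeightOneSpectrum (𝓞 L),
        a + ζI ^ i * b ∈ q.asIdeal → a + ζI ^ j * b ∈ q.asIdeal →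
          (r : 𝓞 L) * dL ∈ q.asIdeal :=
  coprime_outside_S_L_rd_general r p L ζ hζ ζI hζI dL a b c heq hprim
end

section
/- Let K be a totally real number field, r ≥ 5 and p ≥ 5 rational primes, d ∈ O_K \ {0}, and K⁺ = K(ζ_r + ζ_r⁻¹). Let (a, b, c) ∈ O_{K⁺}³ be a nontrivial primitive solution of a^r + b^r = d·c^p. Fix integers 0 ≤ k₁ < k₂ < k₃ ≤ (r−1)/2 and set A = α·f_{k₁}(a, b), B = β·f_{k₂}(a, b), C = γ·f_{k₃}(a, b), where α = ζ_r^{k₃} + ζ_r^{−k₃} − ζ_r^{k₂} − ζ_r^{−k₂}, β = ζ_r^{k₁} + ζ_r^{−k₁} − ζ_r^{k₃} − ζ_r^{−k₃}, γ = ζ_r^{k₂} + ζ_r^{−k₂} − ζ_r^{k₁} − ζ_r^{−k₁}. Then A, B, C are pairwise coprime outside S_{K⁺,rd}: no prime ideal q of O_{K⁺} with q ∤ r·d divides two of A, B, C. -/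
/-!
Write `e k = ζ ^ k + ζ⁻¹ ^ k` and `f_k = a ^ 2 + e k * a * b + b ^ 2`. For `i < j` with
`i + j < r`, the identity `ζ ^ j (e j - e i) = (ζ ^ (j - i) - 1) (ζ ^ (i + j) - 1)` and
`ζ ^ m - 1 ∣ r` for `0 < m < r` show that `e j - e i` divides `r ^ 2` in `𝓞 K⁺`; so these
differences are units at any prime `q ∤ r`. Then `f_i, f_j ∈ q` forces `(e j - e i) a b ∈ q`,
hence `a, b ∈ q`, hence `d c ^ p ∈ q` and `c ∈ q` when `q ∤ d`, against primitivity.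
-/

open IsDedekindDomain NumberField

theorem IsPrimitiveRoot.pow_sub_one_dvd_natCast {A : Type*} [CommRing A] [IsDomain A] {ζ : A}
    {n m : ℕ} (hζ : IsPrimitiveRoot ζ n) (hm0 : m ≠ 0) (hmn : m < n) : ζ ^ m - 1 ∣ (n : A) :=
  sub_one_dvd_natCast_of_pow_eq_one (by rw [← pow_mul, mul_comm, pow_mul, hζ.pow_eq_one, one_pow])
    (hζ.pow_ne_one_of_pos_of_lt hm0 hmn)

theorem pow_mul_add_inv_pow_sub_add_inv_pow {K : Type*} [Field K] {ζ : K} (hζ : ζ ≠ 0)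
    {i j : ℕ} (hij : i ≤ j) :
    ζ ^ j * (ζ ^ j + ζ⁻¹ ^ j - (ζ ^ i + ζ⁻¹ ^ i)) = (ζ ^ (j - i) - 1) * (ζ ^ (i + j) - 1) := by
  obtain ⟨k, rfl⟩ := Nat.exists_eq_add_of_le hij
  rw [Nat.add_sub_cancel_left]
  simp only [inv_pow, pow_add]
  field_simp
  ring

theorem NumberField.RingOfIntegers.dvd_of_algebraMap_dvd {F E : Type*} [Field F] [Field E]
    [Algebra F E] {x y : 𝓞 F} (h : algebraMap (𝓞 F) (𝓞 E) x ∣ algebraMap (𝓞 F) (𝓞 E) y) :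
    x ∣ y := by
  obtain ⟨w, hw⟩ := h
  have hwE : algebraMap F E y = algebraMap F E x * w := congrArg Subtype.val hw
  rcases eq_or_ne x 0 with rfl | hx
  · simpa using hwE
  have hxF : (x : F) ≠ 0 := by exact_mod_cast hx
  have hint : IsIntegral ℤ ((y : F) / x) := by
    refine (isIntegral_algebraMap_iff (algebraMap F E).injective).mp ?_
    rw [map_div₀, hwE, mul_div_cancel_left₀ _ ((map_ne_zero _).mpr hxF)]
    exact w.isIntegral_coe
  refine ⟨⟨_, hint⟩, RingOfIntegers.coe_injective ?_⟩
  change (y : F) = x * (y / x)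
  rw [mul_div_cancel₀ _ hxF]

theorem Ideal.IsPrime.mem_and_mem_of_sq_add_mul_add_sq_mem {R : Type*} [CommRing R]
    {P : Ideal R} (hP : P.IsPrime) {a b s t : R} (hs : a ^ 2 + s * a * b + b ^ 2 ∈ P)
    (ht : a ^ 2 + t * a * b + b ^ 2 ∈ P) (hst : t - s ∉ P) : a ∈ P ∧ b ∈ P := by
  have hab : a * b ∈ P := by
    have h := P.sub_mem ht hs
    rw [show a ^ 2 + t * a * b + b ^ 2 - (a ^ 2 + s * a * b + b ^ 2) = (t - s) * (a * b) by ring]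
      at h
    exact (hP.mem_or_mem h).resolve_left hst
  rcases hP.mem_or_mem hab with ha | hb
  · refine ⟨ha, hP.mem_of_pow_mem 2 ?_⟩
    rw [show b ^ 2 = a ^ 2 + s * a * b + b ^ 2 - a * (a + s * b) by ring]
    exact P.sub_mem hs (P.mul_mem_right _ ha)
  · refine ⟨hP.mem_of_pow_mem 2 ?_, hb⟩
    rw [show a ^ 2 = a ^ 2 + s * a * b + b ^ 2 - b * (b + s * a) by ring]
    exact P.sub_mem hs (P.mul_mem_right _ hb)

theorem Ideal.IsPrime.not_and_mem_of_add_pow_eq_mul_pow {R : Type*} [CommRing R]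
    {P : Ideal R} (hP : P.IsPrime) {a b c d : R} {m n : ℕ} (hm : m ≠ 0)
    (heq : a ^ m + b ^ m = d * c ^ n) (hd : d ∉ P) (habc : Ideal.span {a, b, c} = ⊤) :
    ¬ (a ∈ P ∧ b ∈ P) := by
  rintro ⟨ha, hb⟩
  have hc : c ∈ P := by
    have hdc : d * c ^ n ∈ P :=
      heq ▸ P.add_mem (P.pow_mem_of_mem ha m (Nat.pos_of_ne_zero hm))
        (P.pow_mem_of_mem hb m (Nat.pos_of_ne_zero hm))
    exact hP.mem_of_pow_mem n ((hP.mem_or_mem hdc).resolve_left hd)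
  refine hP.ne_top (top_le_iff.mp (habc ▸ Ideal.span_le.mpr ?_))
  simp [Set.insert_subset_iff, ha, hb, hc]

section

variable {F E : Type*} [Field F] [Field E] [Algebra F E] {ζ : E} {r : ℕ} {e : ℕ → 𝓞 F}

theorem sub_dvd_natCast_sq (hζ : IsPrimitiveRoot ζ r)
    (he : ∀ k, algebraMap F E (e k) = ζ ^ k + ζ⁻¹ ^ k) {i j : ℕ} (hij : i < j) (hr : i + j < r) :
    e j - e i ∣ (r : 𝓞 F) ^ 2 := by
  have hζ0 : ζ ≠ 0 := hζ.ne_zero (by omega)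
  let ζO : 𝓞 E := ⟨ζ, hζ.isIntegral (by omega)⟩
  have hζO : IsPrimitiveRoot ζO r := hζ.of_map_of_injective RingOfIntegers.coe_injective
  have hfactor : algebraMap (𝓞 F) (𝓞 E) (e j - e i) * ζO ^ j
      = (ζO ^ (j - i) - 1) * (ζO ^ (i + j) - 1) := by
    refine RingOfIntegers.coe_injective ?_
    simp only [map_sub, map_mul, map_pow, map_one]
    change (algebraMap F E (e j) - algebraMap F E (e i)) * ζ ^ j
      = (ζ ^ (j - i) - 1) * (ζ ^ (i + j) - 1)
    rw [he, he, mul_comm]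
    exact pow_mul_add_inv_pow_sub_add_inv_pow hζ0 hij.le
  apply RingOfIntegers.dvd_of_algebraMap_dvd (E := E)
  rw [map_pow, map_natCast, ← ((hζO.isUnit (by omega)).pow j).mul_right_dvd, hfactor, sq]
  exact mul_dvd_mul (hζO.pow_sub_one_dvd_natCast (by omega) (by omega))
    (hζO.pow_sub_one_dvd_natCast (by omega) (by omega))

theorem sub_notMem_of_natCast_notMem (hζ : IsPrimitiveRoot ζ r)
    (he : ∀ k, algebraMap F E (e k) = ζ ^ k + ζ⁻¹ ^ k) {P : Ideal (𝓞 F)} (hP : P.IsPrime)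
    (hrP : (r : 𝓞 F) ∉ P) {i j : ℕ} (hij : i < j) (hr : i + j < r) : e j - e i ∉ P :=
  fun h => hrP (hP.mem_of_pow_mem 2 (P.mem_of_dvd (sub_dvd_natCast_sq hζ he hij hr) h))

theorem not_and_sq_add_mul_add_sq_mem (hζ : IsPrimitiveRoot ζ r)
    (he : ∀ k, algebraMap F E (e k) = ζ ^ k + ζ⁻¹ ^ k) {P : Ideal (𝓞 F)} (hP : P.IsPrime)
    (hrP : (r : 𝓞 F) ∉ P) {a b c d : 𝓞 F} {p : ℕ} (heq : a ^ r + b ^ r = d * c ^ p)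
    (hd : d ∉ P) (habc : Ideal.span {a, b, c} = ⊤) {i j : ℕ} (hij : i < j) (hr : i + j < r) :
    ¬ (a ^ 2 + e i * a * b + b ^ 2 ∈ P ∧ a ^ 2 + e j * a * b + b ^ 2 ∈ P) := fun ⟨hi, hj⟩ =>
  hP.not_and_mem_of_add_pow_eq_mul_pow (by omega) heq hd habc
    (hP.mem_and_mem_of_sq_add_mul_add_sq_mem hi hj
      (sub_notMem_of_natCast_notMem hζ he hP hrP hij hr))

end

theorem ABC_pairwise_coprime_outside_S_general
    (K : Type*) [Field K]
    (r : ℕ)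
    (p : ℕ)
    -- `L = K(ζ_r)` where `ζ` is a primitive `r`-th root of unity
    (L : Type*) [Field L] [Algebra K L]
    (ζ : L) (hζ : IsPrimitiveRoot ζ r)
    -- `K⁺ = K(ζ_r + ζ_r⁻¹)`
    (Kp : IntermediateField K L)
    -- `dp` is the image of `d` in `𝓞 K⁺`, and `e k` is `ζ^k + ζ^{−k}` as an element of `𝓞 K⁺`
    (dp : 𝓞 Kp)
    (e : ℕ → 𝓞 Kp) (he : ∀ k : ℕ, ((e k : Kp) : L) = ζ ^ k + ζ⁻¹ ^ k)
    -- `(a, b, c)` is a nontrivial primitive solution of `a^r + b^r = d·c^p` in `𝓞 K⁺`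
    (a b c : 𝓞 Kp)
    (heq : a ^ r + b ^ r = dp * c ^ p)
    (hprim : Ideal.span {a, b, c} = ⊤)
    -- `0 ≤ k₁ < k₂ < k₃ ≤ (r−1)/2`
    (k₁ k₂ k₃ : ℕ) (h12 : k₁ < k₂) (h23 : k₂ < k₃) (h3 : k₃ ≤ (r - 1) / 2)
    -- `A = α·f_{k₁}(a,b)`, `B = β·f_{k₂}(a,b)`, `C = γ·f_{k₃}(a,b)`
    (A B C : 𝓞 Kp)
    (hA : A = (e k₃ - e k₂) * (a ^ 2 + e k₁ * a * b + b ^ 2))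
    (hB : B = (e k₁ - e k₃) * (a ^ 2 + e k₂ * a * b + b ^ 2))
    (hC : C = (e k₂ - e k₁) * (a ^ 2 + e k₃ * a * b + b ^ 2)) :
    ∀ q : HeightOneSpectrum (𝓞 Kp), (r : 𝓞 Kp) * dp ∉ q.asIdeal →
      ¬ (A ∈ q.asIdeal ∧ B ∈ q.asIdeal) ∧
      ¬ (B ∈ q.asIdeal ∧ C ∈ q.asIdeal) ∧
      ¬ (A ∈ q.asIdeal ∧ C ∈ q.asIdeal) := by
  intro q hq
  have hrq : (r : 𝓞 Kp) ∉ q.asIdeal := fun h => hq (q.asIdeal.mul_mem_right _ h)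
  have hdq : dp ∉ q.asIdeal := fun h => hq (q.asIdeal.mul_mem_left _ h)
  have hsub {i j : ℕ} (hij : i < j) (hj : j ≤ (r - 1) / 2) : e j - e i ∉ q.asIdeal :=
    sub_notMem_of_natCast_notMem hζ he q.isPrime hrq hij (by omega)
  have hf {i j : ℕ} (hij : i < j) (hj : j ≤ (r - 1) / 2) :=
    not_and_sq_add_mul_add_sq_mem hζ he q.isPrime hrq heq hdq hprim hij (by omega)
  have hfA (h : A ∈ q.asIdeal) := (q.isPrime.mem_or_mem (hA ▸ h)).resolve_left (hsub h23 h3)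
  have hfB (h : B ∈ q.asIdeal) := (q.isPrime.mem_or_mem (hB ▸ h)).resolve_left <| by
    rw [← neg_sub, Ideal.neg_mem_iff]
    exact hsub (h12.trans h23) h3
  have hfC (h : C ∈ q.asIdeal) := (q.isPrime.mem_or_mem (hC ▸ h)).resolve_left (hsub h12 (by omega))
  exact ⟨fun ⟨h, h'⟩ => hf h12 (by omega) ⟨hfA h, hfB h'⟩,
    fun ⟨h, h'⟩ => hf h23 h3 ⟨hfB h, hfC h'⟩,
    fun ⟨h, h'⟩ => hf (h12.trans h23) h3 ⟨hfA h, hfC h'⟩⟩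

/-- Corollary 3.5 of the paper. -/
theorem ABC_pairwise_coprime_outside_S
    (K : Type*) [Field K] [NumberField K] (hK : TotallyReal K)
    (r : ℕ) (hr : r.Prime) (hr5 : 5 ≤ r)
    (p : ℕ) (hp : p.Prime) (hp5 : 5 ≤ p)
    (d : 𝓞 K) (hd0 : d ≠ 0)
    -- `L = K(ζ_r)` where `ζ` is a primitive `r`-th root of unity
    (L : Type*) [Field L] [NumberField L] [Algebra K L]
    (ζ : L) (hζ : IsPrimitiveRoot ζ r)
    (hL : IntermediateField.adjoin K {ζ} = ⊤)
    -- `K⁺ = K(ζ_r + ζ_r⁻¹)`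
    (Kp : IntermediateField K L)
    (hKp : Kp = IntermediateField.adjoin K {ζ + ζ⁻¹})
    -- `dp` is the image of `d` in `𝓞 K⁺`, and `e k` is `ζ^k + ζ^{−k}` as an element of `𝓞 K⁺`
    (dp : 𝓞 Kp) (hdp : ((dp : Kp) : L) = algebraMap K L (d : K))
    (e : ℕ → 𝓞 Kp) (he : ∀ k : ℕ, ((e k : Kp) : L) = ζ ^ k + ζ⁻¹ ^ k)
    -- `(a, b, c)` is a nontrivial primitive solution of `a^r + b^r = d·c^p` in `𝓞 K⁺`
    (a b c : 𝓞 Kp)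
    (heq : a ^ r + b ^ r = dp * c ^ p)
    (hnt : a * b * c ≠ 0)
    (hprim : Ideal.span {a, b, c} = ⊤)
    -- `0 ≤ k₁ < k₂ < k₃ ≤ (r−1)/2`
    (k₁ k₂ k₃ : ℕ) (h12 : k₁ < k₂) (h23 : k₂ < k₃) (h3 : k₃ ≤ (r - 1) / 2)
    -- `A = α·f_{k₁}(a,b)`, `B = β·f_{k₂}(a,b)`, `C = γ·f_{k₃}(a,b)`
    (A B C : 𝓞 Kp)
    (hA : A = (e k₃ - e k₂) * (a ^ 2 + e k₁ * a * b + b ^ 2))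
    (hB : B = (e k₁ - e k₃) * (a ^ 2 + e k₂ * a * b + b ^ 2))
    (hC : C = (e k₂ - e k₁) * (a ^ 2 + e k₃ * a * b + b ^ 2)) :
    ∀ q : HeightOneSpectrum (𝓞 Kp), (r : 𝓞 Kp) * dp ∉ q.asIdeal →
      ¬ (A ∈ q.asIdeal ∧ B ∈ q.asIdeal) ∧
      ¬ (B ∈ q.asIdeal ∧ C ∈ q.asIdeal) ∧
      ¬ (A ∈ q.asIdeal ∧ C ∈ q.asIdeal) :=
  ABC_pairwise_coprime_outside_S_general K r p L ζ hζ Kp dp e he a b c heq hprim k₁ k₂ k₃ h12 h23 h3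
    A B C hA hB hC
end

section
/- Let K be a totally real number field, r ≥ 5 and p ≥ 5 rational primes, d ∈ O_K \ {0}, and K⁺ = K(ζ_r + ζ_r⁻¹). Let (a, b, c) ∈ O_{K⁺}³ be a nontrivial primitive solution of a^r + b^r = d·c^p, let A = α·f_{k₁}(a, b), B = β·f_{k₂}(a, b), C = γ·f_{k₃}(a, b) for fixed 0 ≤ k₁ < k₂ < k₃ ≤ (r−1)/2, and set Δ = 2⁴·(A·B·C)² and c₄ = 2⁴·(A·B + B·C + C·A). Then for every prime ideal q of O_{K⁺} with q ∤ 2·r·d: p divides v_q(Δ), and if v_q(Δ) > 0 then v_q(c₄) = 0. -/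
open IsDedekindDomain NumberField

/-!
Write `r = 2m + 1` and `f_k = a² + (ζ^k + ζ^{-k})ab + b²`. Then
`a^r + b^r = (a + b) f₁ ⋯ f_m = d c^p`, and over `K(ζ)` each `f_k` splits as
`(a + ζ^k b)(a + ζ^{-k} b)`. Let `Q` be a prime of `K(ζ)` above `q ∤ 2rd`. Since `1 - ζ^j`
divides `r`, distinct powers of `ζ` stay distinct modulo `Q`, so two different linear factors
`a + ζ^u b` cannot both lie in `Q` unless `a, b ∈ Q`, and then `c ∈ q` contradicts primitivity.
Hence `a + b, f₁, …, f_m` are pairwise coprime at `q`, so `p ∣ v_q(f_k)` for every `k`; the same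
fact makes `α, β, γ` units at `q`. So `p ∣ v_q(A), v_q(B), v_q(C)`, at most one of `A, B, C`
lies in `q`, and if `q ∣ Δ` then `AB + BC + CA` is a unit at `q`.
-/

lemma Ideal.IsPrime.mul_add_mul_add_mul_notMem {R : Type*} [CommRing R] {I : Ideal R}
    (hI : I.IsPrime) {x y z : R} (hxyz : x * y * z ∈ I) (hxy : x ∈ I → y ∉ I)
    (hyz : y ∈ I → z ∉ I) (hzx : z ∈ I → x ∉ I) : x * y + y * z + z * x ∉ I := by
  have key : ∀ {u v w : R}, u ∈ I → v ∉ I → w ∉ I → u * v + v * w + w * u ∉ I := by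
    intro u v w hu hv hw hs
    have hvw : v * w ∈ I := by
      rw [show v * w = (u * v + v * w + w * u) - u * (v + w) by ring]
      exact I.sub_mem hs (I.mul_mem_right _ hu)
    exact (hI.mem_or_mem hvw).elim hv hw
  rcases hI.mem_or_mem hxyz with hxy' | hz
  · rcases hI.mem_or_mem hxy' with hx | hy
    · exact key hx (hxy hx) fun hz => hzx hz hx
    · rw [show x * y + y * z + z * x = y * z + z * x + x * y by ring]
      exact key hy (hyz hy) fun hx => hxy hx hy
  · rw [show x * y + y * z + z * x = z * x + x * y + y * z by ring]
    exact key hz (hzx hz) fun hy => hyz hy hz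

lemma Ideal.IsPrime.not_mem_and_mem_of_span_eq_top {R : Type*} [CommRing R] {I : Ideal R}
    (hI : I.IsPrime) {a b c d : R} {r n : ℕ} (hr : r ≠ 0) (heq : a ^ r + b ^ r = d * c ^ n)
    (hd : d ∉ I) (hprim : Ideal.span {a, b, c} = ⊤) : ¬(a ∈ I ∧ b ∈ I) := by
  rintro ⟨ha, hb⟩
  have hdc : d * c ^ n ∈ I := heq ▸ I.add_mem (I.pow_mem_of_mem ha r (Nat.pos_of_ne_zero hr))
    (I.pow_mem_of_mem hb r (Nat.pos_of_ne_zero hr))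
  have hc : c ∈ I := hI.mem_of_pow_mem n ((hI.mem_or_mem hdc).resolve_left hd)
  apply hI.ne_top
  rw [eq_top_iff, ← hprim, Ideal.span_le]
  simp [Set.insert_subset_iff, ha, hb, hc]

section Valuation

variable {F : Type*} [Field F] [NumberField F] (P : HeightOneSpectrum (𝓞 F))

lemma vP_zero : vP P (0 : F) = 0 := by simp [vP]

lemma vP_mul {x y : F} (hx : x ≠ 0) (hy : y ≠ 0) :
    vP P (x * y) = vP P x + vP P y := by
  classical
  rw [vP, vP, vP, dif_neg (mul_ne_zero hx hy), dif_neg hx, dif_neg hy, ← neg_add, neg_inj,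
    ← toAdd_mul]
  congr 1
  rw [← WithZero.coe_inj, WithZero.coe_mul, WithZero.coe_unzero, WithZero.coe_unzero,
    WithZero.coe_unzero, map_mul]

lemma vP_eq_zero_of_notMem {x : 𝓞 F} (hx : x ∉ P.asIdeal) : vP P (x : F) = 0 := by
  classical
  have hx0 : (x : F) ≠ 0 := by
    rw [ne_eq, RingOfIntegers.coe_eq_zero_iff]
    rintro rfl
    exact hx P.asIdeal.zero_mem
  have h1 : P.valuation F x = 1 := by
    rw [HeightOneSpectrum.valuation_of_algebraMap, HeightOneSpectrum.intValuation_eq_one_iff]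
    exact hx
  rw [vP, dif_neg hx0, neg_eq_zero, ← toAdd_one]
  congr 1
  rw [← WithZero.coe_inj, WithZero.coe_unzero, h1, WithZero.coe_one]

lemma vP_one : vP P (1 : F) = 0 := by
  simpa using vP_eq_zero_of_notMem P (x := 1) (P.asIdeal.ne_top_iff_one.mp P.isPrime.ne_top)

lemma vP_pow (x : F) (n : ℕ) : vP P (x ^ n) = n * vP P x := by
  induction n with
  | zero => simp [vP_one]
  | succ n ih =>
    rcases eq_or_ne x 0 with rfl | hx
    · simp [vP_zero]
    rw [pow_succ, vP_mul P (pow_ne_zero n hx) hx, ih]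
    push_cast
    ring

lemma dvd_vP_mul {n : ℤ} {x y : 𝓞 F} (hx : n ∣ vP P x) (hy : n ∣ vP P y) :
    n ∣ vP P ↑(x * y) := by
  rcases eq_or_ne x 0 with rfl | hx0
  · simp [vP_zero]
  rcases eq_or_ne y 0 with rfl | hy0
  · simp [vP_zero]
  push_cast
  rw [vP_mul P (by simpa) (by simpa)]
  exact dvd_add hx hy

lemma dvd_vP_mul_of_notMem {n : ℤ} {t x : 𝓞 F} (ht : t ∉ P.asIdeal) (hx : n ∣ vP P x) :
    n ∣ vP P ↑(t * x) :=
  dvd_vP_mul P (by rw [vP_eq_zero_of_notMem P ht]; exact dvd_zero _) hx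

lemma dvd_vP_of_mul_eq_mul_pow {x y u c : 𝓞 F} {n : ℕ} (h : x * y = u * c ^ n)
    (hy : y ∉ P.asIdeal) (hu : u ∉ P.asIdeal) : (n : ℤ) ∣ vP P x := by
  rcases eq_or_ne x 0 with rfl | hx0
  · simp [vP_zero]
  have hy0 : y ≠ 0 := by rintro rfl; exact hy P.asIdeal.zero_mem
  have hu0 : u ≠ 0 := by rintro rfl; exact hu P.asIdeal.zero_mem
  have hcn : c ^ n ≠ 0 := right_ne_zero_of_mul (h ▸ mul_ne_zero hx0 hy0)
  have hval : vP P x + vP P y = vP P u + vP P ((c : F) ^ n) := by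
    rw [← vP_mul P (by simpa) (by simpa), ← vP_mul P (by simpa) (by exact_mod_cast hcn)]
    exact_mod_cast congrArg (vP P ∘ (↑)) h
  rw [vP_eq_zero_of_notMem P hy, vP_eq_zero_of_notMem P hu, vP_pow] at hval
  exact ⟨vP P c, by omega⟩

lemma dvd_vP_of_prod_eq_mul_pow {ι : Type*} {s : Finset ι} {g : ι → 𝓞 F} {u c : 𝓞 F} {n : ℕ}
    (h : ∏ i ∈ s, g i = u * c ^ n) (hu : u ∉ P.asIdeal)
    (hg : ∀ i ∈ s, ∀ j ∈ s, i ≠ j → g i ∈ P.asIdeal → g j ∉ P.asIdeal) {i : ι} (hi : i ∈ s) :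
    (n : ℤ) ∣ vP P (g i) := by
  classical
  by_cases hgi : g i ∈ P.asIdeal
  · refine dvd_vP_of_mul_eq_mul_pow P (y := ∏ j ∈ s.erase i, g j) (c := c) ?_ ?_ hu
    · rw [Finset.mul_prod_erase s g hi, h]
    · rw [Ideal.IsPrime.prod_mem_iff]
      rintro ⟨j, hj, hgj⟩
      exact hg i hi j (Finset.mem_of_mem_erase hj) (Finset.ne_of_mem_erase hj).symm hgi hgj
  · rw [vP_eq_zero_of_notMem P hgi]
    exact dvd_zero _

end Valuation

-- `quadForm (e k) a b` is the paper's `f_k(a, b)`.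
def quadForm {R : Type*} [CommRing R] (t a b : R) : R := a ^ 2 + t * a * b + b ^ 2

lemma quadForm_add_of_mul_eq_one {S : Type*} [CommRing S] {u v : S} (h : u * v = 1) (x y : S) :
    quadForm (u + v) x y = (x + u * y) * (x + v * y) := by
  unfold quadForm
  linear_combination (-y ^ 2) * h

lemma map_quadForm {R S : Type*} [CommRing R] [CommRing S] (f : R →+* S) (t a b : R) :
    f (quadForm t a b) = quadForm (f t) (f a) (f b) := by
  simp [quadForm]

lemma algebraMap_quadForm {R S : Type*} [CommRing R] [CommRing S] [Algebra R S] {ζ : S} {r : ℕ}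
    (hζ : ζ ^ r = 1) {k : ℕ} (hk : k ≤ r) {t : R}
    (ht : algebraMap R S t = ζ ^ k + ζ ^ (r - k)) (a b : R) :
    algebraMap R S (quadForm t a b) =
      (algebraMap R S a + ζ ^ k * algebraMap R S b) *
        (algebraMap R S a + ζ ^ (r - k) * algebraMap R S b) := by
  rw [map_quadForm, ht, quadForm_add_of_mul_eq_one]
  rw [← pow_add, Nat.add_sub_cancel' hk, hζ]

namespace IsPrimitiveRoot

variable {S : Type*} [CommRing S] [IsDomain S] {ζ : S} {r : ℕ}

lemma one_sub_pow_dvd (hζ : IsPrimitiveRoot ζ r) {k : ℕ} (hk0 : 0 < k) (hkr : k < r) :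
    1 - ζ ^ k ∣ (r : S) := by
  obtain ⟨n, rfl⟩ : ∃ n, r = n + 1 := ⟨r - 1, by omega⟩
  obtain ⟨j, rfl⟩ : ∃ j, k = j + 1 := ⟨k - 1, by omega⟩
  rw [Nat.cast_succ, ← hζ.prod_one_sub_pow_eq_order]
  exact Finset.dvd_prod_of_mem (fun i => 1 - ζ ^ (i + 1)) (Finset.mem_range.mpr (by omega))

lemma pow_sub_pow_notMem (hζ : IsPrimitiveRoot ζ r) {I : Ideal S} (hI : (r : S) ∉ I)
    {u v : ℕ} (huv : u ≠ v) (hu : u < v + r) (hv : v < u + r) : ζ ^ v - ζ ^ u ∉ I := by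
  wlog h : u < v generalizing u v
  · rw [← neg_sub, I.neg_mem_iff]
    exact this huv.symm hv hu (by omega)
  have hunit : IsUnit (-ζ ^ u) := ((hζ.isUnit (by omega)).pow u).neg
  rw [show ζ ^ v - ζ ^ u = -ζ ^ u * (1 - ζ ^ (v - u)) by
    rw [← pow_sub_mul_pow ζ h.le]; ring, Ideal.unit_mul_mem_iff_mem I hunit]
  exact fun h => hI (I.mem_of_dvd (hζ.one_sub_pow_dvd (by omega) (by omega)) h)

lemma mem_of_add_pow_mul_mem (hζ : IsPrimitiveRoot ζ r) {Q : Ideal S} [Q.IsPrime]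
    (hQ : (r : S) ∉ Q) {u v : ℕ} (huv : u ≠ v) (hu : u < v + r) (hv : v < u + r) {x y : S}
    (hxu : x + ζ ^ u * y ∈ Q) (hxv : x + ζ ^ v * y ∈ Q) : x ∈ Q ∧ y ∈ Q := by
  have hdiff : (ζ ^ v - ζ ^ u) * y ∈ Q := by
    rw [show (ζ ^ v - ζ ^ u) * y = (x + ζ ^ v * y) - (x + ζ ^ u * y) by ring]
    exact Q.sub_mem hxv hxu
  have hy : y ∈ Q :=
    (Ideal.IsPrime.mem_or_mem ‹_› hdiff).resolve_left (hζ.pow_sub_pow_notMem hQ huv hu hv)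
  refine ⟨?_, hy⟩
  simpa using Q.sub_mem hxu (Q.mul_mem_left (ζ ^ u) hy)

lemma pow_add_pow_eq_prod_range (hζ : IsPrimitiveRoot ζ r) (hr : Odd r) (x y : S) :
    x ^ r + y ^ r = ∏ i ∈ Finset.range r, (x + ζ ^ i * y) := by
  classical
  have hinj : Set.InjOn (ζ ^ ·) (Finset.range r) := fun i hi j hj h =>
    hζ.pow_inj (Finset.mem_range.mp hi) (Finset.mem_range.mp hj) h
  rw [hζ.pow_add_pow_eq_prod_add_mul x y hr, Polynomial.nthRootsFinset_def,
    hζ.nthRoots_eq (one_pow r), Multiset.toFinset_map, Multiset.toFinset_range]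
  simp_rw [mul_one]
  rw [Finset.prod_image hinj]

lemma pow_add_pow_eq_mul_prod_pairs {m : ℕ} (hζ : IsPrimitiveRoot ζ (2 * m + 1)) (x y : S) :
    x ^ (2 * m + 1) + y ^ (2 * m + 1) =
      (x + y) * ∏ j ∈ Finset.range m,
        ((x + ζ ^ (j + 1) * y) * (x + ζ ^ (2 * m + 1 - (j + 1)) * y)) := by
  rw [hζ.pow_add_pow_eq_prod_range (odd_two_mul_add_one m), show 2 * m + 1 = (m + 1) + m by ring,
    Finset.prod_range_add, Finset.prod_range_succ',
    ← Finset.prod_range_reflect (fun j => x + ζ ^ (m + 1 + j) * y), Finset.prod_mul_distrib]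
  rw [pow_zero, one_mul, mul_comm _ (x + y), mul_assoc]
  congr 2
  refine Finset.prod_congr rfl fun j hj => ?_
  rw [Finset.mem_range] at hj
  congr 3
  omega

end IsPrimitiveRoot

section LiesOver

variable {R S : Type*} [CommRing R] [CommRing S] [IsDomain S] [Algebra R S] {ζ : S} {r : ℕ}

lemma mem_of_quadForm_mem_of_quadForm_mem (hζ : IsPrimitiveRoot ζ r) {q : Ideal R}
    {Q : Ideal S} [Q.IsPrime] [Q.LiesOver q] (hQ : (r : S) ∉ Q) {i j : ℕ} (hij : i ≠ j)
    (hijr : i + j < r) {s t : R} (hs : algebraMap R S s = ζ ^ i + ζ ^ (r - i))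
    (ht : algebraMap R S t = ζ ^ j + ζ ^ (r - j)) {a b : R} (hsq : quadForm s a b ∈ q)
    (htq : quadForm t a b ∈ q) : a ∈ q ∧ b ∈ q := by
  rw [Ideal.mem_of_liesOver Q q, algebraMap_quadForm hζ.pow_eq_one (by omega) hs,
    Ideal.IsPrime.mul_mem_iff_mem_or_mem ‹_›] at hsq
  rw [Ideal.mem_of_liesOver Q q, algebraMap_quadForm hζ.pow_eq_one (by omega) ht,
    Ideal.IsPrime.mul_mem_iff_mem_or_mem ‹_›] at htq
  rw [Ideal.mem_of_liesOver Q q a, Ideal.mem_of_liesOver Q q b]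
  rcases hsq with hsq | hsq <;> rcases htq with htq | htq <;>
    exact hζ.mem_of_add_pow_mul_mem hQ (by omega) (by omega) (by omega) hsq htq

lemma sub_notMem_of_ne (hζ : IsPrimitiveRoot ζ r) (q : Ideal R) {Q : Ideal S} [Q.IsPrime]
    [Q.LiesOver q] (hQ : (r : S) ∉ Q) {i j : ℕ} (hij : i ≠ j) (hijr : i + j < r) {s t : R}
    (hs : algebraMap R S s = ζ ^ i + ζ ^ (r - i)) (ht : algebraMap R S t = ζ ^ j + ζ ^ (r - j)) :
    t - s ∉ q := by
  have hfac : ζ ^ j + ζ ^ (r - j) - (ζ ^ i + ζ ^ (r - i)) =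
      (ζ ^ j - ζ ^ i) * -(ζ ^ (r - i - j) - ζ ^ 0) := by
    have h1 : ζ ^ j * ζ ^ (r - i - j) = ζ ^ (r - i) := by rw [← pow_add]; congr 1; omega
    have h2 : ζ ^ i * ζ ^ (r - i - j) = ζ ^ (r - j) := by rw [← pow_add]; congr 1; omega
    linear_combination h1 - h2
  rw [Ideal.mem_of_liesOver Q q, map_sub, hs, ht, hfac, Ideal.IsPrime.mul_mem_iff_mem_or_mem ‹_›,
    Q.neg_mem_iff, not_or]
  exact ⟨hζ.pow_sub_pow_notMem hQ hij (by omega) (by omega),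
    hζ.pow_sub_pow_notMem hQ (by omega) (by omega) (by omega)⟩

lemma pow_add_pow_eq_mul_prod_quadForm [FaithfulSMul R S] {m : ℕ}
    (hζ : IsPrimitiveRoot ζ (2 * m + 1)) {e : ℕ → R}
    (he : ∀ k ≤ 2 * m + 1, algebraMap R S (e k) = ζ ^ k + ζ ^ (2 * m + 1 - k)) (a b : R) :
    a ^ (2 * m + 1) + b ^ (2 * m + 1) =
      (a + b) * ∏ j ∈ Finset.range m, quadForm (e (j + 1)) a b := by
  apply FaithfulSMul.algebraMap_injective R S
  simp only [map_add, map_mul, map_pow, map_prod, hζ.pow_add_pow_eq_mul_prod_pairs]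
  congr 1
  refine Finset.prod_congr rfl fun j hj => ?_
  rw [algebraMap_quadForm hζ.pow_eq_one (by simp at hj; omega) (he _ (by simp at hj; omega))]

end LiesOver

theorem dvd_vP_quadForm {F S : Type*} [Field F] [NumberField F] [CommRing S] [IsDomain S]
    [Algebra (𝓞 F) S] [FaithfulSMul (𝓞 F) S] (q : HeightOneSpectrum (𝓞 F)) {Q : Ideal S}
    [Q.IsPrime] [Q.LiesOver q.asIdeal] {ζ : S} {m : ℕ} (hζ : IsPrimitiveRoot ζ (2 * m + 1))
    (hQ : ((2 * m + 1 : ℕ) : S) ∉ Q) {e : ℕ → 𝓞 F}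
    (he : ∀ k ≤ 2 * m + 1, algebraMap (𝓞 F) S (e k) = ζ ^ k + ζ ^ (2 * m + 1 - k))
    {a b c d : 𝓞 F} {n : ℕ} (heq : a ^ (2 * m + 1) + b ^ (2 * m + 1) = d * c ^ n)
    (hd : d ∉ q.asIdeal) (hab : ¬(a ∈ q.asIdeal ∧ b ∈ q.asIdeal)) {k : ℕ} (hk : k ≤ m) :
    (n : ℤ) ∣ vP q (quadForm (e k) a b : 𝓞 F) := by
  have hf0 : quadForm (e 0) a b = (a + b) ^ 2 := by
    have he0 : e 0 = 2 := FaithfulSMul.algebraMap_injective (𝓞 F) S <| by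
      rw [he 0 (by omega), Nat.sub_zero, hζ.pow_eq_one, map_ofNat]
      norm_num
    rw [he0, quadForm]
    ring
  -- `g` lists the pairwise coprime factors `a + b, f₁, …, f_m` of `a ^ (2m+1) + b ^ (2m+1)`
  let g : ℕ → 𝓞 F := Function.update (fun j => quadForm (e j) a b) 0 (a + b)
  have hg : ∀ j, g j ∈ q.asIdeal → quadForm (e j) a b ∈ q.asIdeal := by
    rintro (_ | j) hj
    · rw [hf0]
      exact Ideal.pow_mem_of_mem _ (by simpa [g] using hj) 2 two_pos
    · simpa [g] using hj
  have hprod : ∏ j ∈ Finset.range (m + 1), g j = d * c ^ n := by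
    rw [Finset.prod_range_succ', ← heq, pow_add_pow_eq_mul_prod_quadForm hζ he, mul_comm]
    simp [g]
  have hcop : ∀ i ∈ Finset.range (m + 1), ∀ j ∈ Finset.range (m + 1), i ≠ j →
      g i ∈ q.asIdeal → g j ∉ q.asIdeal := by
    intro i hi j hj hij hgi hgj
    rw [Finset.mem_range] at hi hj
    exact hab (mem_of_quadForm_mem_of_quadForm_mem hζ hQ hij (by omega) (he i (by omega))
      (he j (by omega)) (hg i hgi) (hg j hgj))
  have hgk := dvd_vP_of_prod_eq_mul_pow q hprod hd hcop (Finset.mem_range.mpr (Nat.lt_succ_of_le hk))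
  rcases k with _ | k
  · rw [hf0]
    push_cast
    rw [vP_pow]
    exact (by simpa [g] using hgk : (n : ℤ) ∣ vP q (a + b : 𝓞 F)).mul_left _
  · simpa [g] using hgk

lemma IsPrimitiveRoot.exists_ringOfIntegers {F L : Type*} [Field F] [Field L] [NumberField L]
    [Algebra F L] {ζ : L} {r : ℕ} (hζ : IsPrimitiveRoot ζ r) (hr : 0 < r) {e : ℕ → 𝓞 F}
    (he : ∀ k, algebraMap F L (e k) = ζ ^ k + ζ⁻¹ ^ k) :
    ∃ ζ' : 𝓞 L, IsPrimitiveRoot ζ' r ∧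
      ∀ k ≤ r, algebraMap (𝓞 F) (𝓞 L) (e k) = ζ' ^ k + ζ' ^ (r - k) := by
  refine ⟨⟨ζ, hζ.isIntegral hr⟩, .of_map_of_injective (f := algebraMap (𝓞 L) L) hζ
    RingOfIntegers.coe_injective, fun k hk => RingOfIntegers.coe_injective ?_⟩
  change algebraMap F L (e k) = ζ ^ k + ζ ^ (r - k)
  rw [he, pow_sub₀ ζ (hζ.ne_zero hr.ne') hk, hζ.pow_eq_one, one_mul, inv_pow]

theorem dvd_vP_disc_and_vP_c4_eq_zero {F : Type*} [Field F] [NumberField F]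
    (q : HeightOneSpectrum (𝓞 F)) {n : ℕ} {A B C : 𝓞 F} (hA : (n : ℤ) ∣ vP q A)
    (hB : (n : ℤ) ∣ vP q B) (hC : (n : ℤ) ∣ vP q C) (hAB : A ∈ q.asIdeal → B ∉ q.asIdeal)
    (hBC : B ∈ q.asIdeal → C ∉ q.asIdeal) (hCA : C ∈ q.asIdeal → A ∉ q.asIdeal)
    (h2 : (2 : 𝓞 F) ∉ q.asIdeal) :
    (n : ℤ) ∣ vP q (2 ^ 4 * (A * B * C) ^ 2 : 𝓞 F) ∧
      (0 < vP q (2 ^ 4 * (A * B * C) ^ 2 : 𝓞 F) →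
        vP q (2 ^ 4 * (A * B + B * C + C * A) : 𝓞 F) = 0) := by
  have h16 : (2 : 𝓞 F) ^ 4 ∉ q.asIdeal := fun h => h2 (q.isPrime.mem_of_pow_mem 4 h)
  refine ⟨dvd_vP_mul_of_notMem q h16 ?_, fun hpos => ?_⟩
  · have hABC := dvd_vP_mul q (dvd_vP_mul q hA hB) hC
    push_cast at hABC ⊢
    rw [vP_pow]
    exact hABC.mul_left 2
  · have hΔ : 2 ^ 4 * (A * B * C) ^ 2 ∈ q.asIdeal := by
      by_contra h
      rw [vP_eq_zero_of_notMem q h] at hpos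
      exact hpos.false
    have hABC : A * B * C ∈ q.asIdeal :=
      q.isPrime.mem_of_pow_mem 2 ((q.isPrime.mem_or_mem hΔ).resolve_left h16)
    refine vP_eq_zero_of_notMem q fun h => (q.isPrime.mem_or_mem h).elim h16 ?_
    exact q.isPrime.mul_add_mul_add_mul_notMem hABC hAB hBC hCA

theorem frey_curve_semistable_outside_S_general
    (K : Type*) [Field K] [NumberField K]
    (r : ℕ) (hr : r.Prime)
    (p : ℕ)
    -- `L = K(ζ_r)` where `ζ` is a primitive `r`-th root of unity
    (L : Type*) [Field L] [NumberField L] [Algebra K L]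
    (ζ : L) (hζ : IsPrimitiveRoot ζ r)
    -- `K⁺ = K(ζ_r + ζ_r⁻¹)`
    (Kp : IntermediateField K L)
    -- `dp` is the image of `d` in `𝓞 K⁺`, and `e k` is `ζ^k + ζ^{−k}` as an element of `𝓞 K⁺`
    (dp : 𝓞 Kp)
    (e : ℕ → 𝓞 Kp) (he : ∀ k : ℕ, ((e k : Kp) : L) = ζ ^ k + ζ⁻¹ ^ k)
    -- `(a, b, c)` is a nontrivial primitive solution of `a^r + b^r = d·c^p` in `𝓞 K⁺`
    (a b c : 𝓞 Kp)
    (heq : a ^ r + b ^ r = dp * c ^ p)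
    (hprim : Ideal.span {a, b, c} = ⊤)
    -- `0 ≤ k₁ < k₂ < k₃ ≤ (r−1)/2`
    (k₁ k₂ k₃ : ℕ) (h12 : k₁ < k₂) (h23 : k₂ < k₃) (h3 : k₃ ≤ (r - 1) / 2)
    -- `A = α·f_{k₁}(a,b)`, `B = β·f_{k₂}(a,b)`, `C = γ·f_{k₃}(a,b)`
    (A B C : 𝓞 Kp)
    (hA : A = (e k₃ - e k₂) * (a ^ 2 + e k₁ * a * b + b ^ 2))
    (hB : B = (e k₁ - e k₃) * (a ^ 2 + e k₂ * a * b + b ^ 2))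
    (hC : C = (e k₂ - e k₁) * (a ^ 2 + e k₃ * a * b + b ^ 2))
    -- `Δ` and `c₄` of the Frey curve `Y² = X(X − A)(X + B)`
    (Δ c₄ : 𝓞 Kp)
    (hΔ : Δ = 2 ^ 4 * (A * B * C) ^ 2)
    (hc₄ : c₄ = 2 ^ 4 * (A * B + B * C + C * A)) :
    ∀ q : HeightOneSpectrum (𝓞 Kp), 2 * (r : 𝓞 Kp) * dp ∉ q.asIdeal →
      (p : ℤ) ∣ vP q (Δ : Kp) ∧ (0 < vP q (Δ : Kp) → vP q (c₄ : Kp) = 0) := by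
  intro q hq
  obtain ⟨⟨hq2, hqr⟩, hqd⟩ :
      ((2 : 𝓞 Kp) ∉ q.asIdeal ∧ (r : 𝓞 Kp) ∉ q.asIdeal) ∧ dp ∉ q.asIdeal := by
    simpa only [q.isPrime.mul_mem_iff_mem_or_mem, not_or] using hq
  obtain ⟨m, rfl⟩ := hr.odd_of_ne_two (by omega)
  replace h3 : k₃ ≤ m := by omega
  obtain ⟨ζ', hζ', he'⟩ := hζ.exists_ringOfIntegers (F := Kp) (e := e) (by omega) he
  have := q.isMaximal
  obtain ⟨Q, _, _⟩ := Ideal.exists_maximal_ideal_liesOver_of_isIntegral (S := 𝓞 L) q.asIdeal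
  have hQ : ((2 * m + 1 : ℕ) : 𝓞 L) ∉ Q := by
    rwa [← map_natCast (algebraMap (𝓞 Kp) (𝓞 L)), ← Ideal.mem_of_liesOver Q q.asIdeal]
  have hab := q.isPrime.not_mem_and_mem_of_span_eq_top (by omega) heq hqd hprim
  have hpair : ∀ {i j}, i ≠ j → i ≤ m → j ≤ m → quadForm (e i) a b ∈ q.asIdeal →
      quadForm (e j) a b ∉ q.asIdeal := fun hij hi hj hfi hfj =>
    hab (mem_of_quadForm_mem_of_quadForm_mem hζ' hQ hij (by omega) (he' _ (by omega))
      (he' _ (by omega)) hfi hfj)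
  have hfactor : ∀ {X : 𝓞 Kp} {i j k : ℕ}, X = (e k - e j) * quadForm (e i) a b → j ≠ k →
      i ≤ m → j ≤ m → k ≤ m →
      (p : ℤ) ∣ vP q X ∧ (X ∈ q.asIdeal → quadForm (e i) a b ∈ q.asIdeal) := by
    intro X i j k hX hjk hi hj hk
    have hsub :=
      sub_notMem_of_ne hζ' q.asIdeal hQ hjk (by omega) (he' j (by omega)) (he' k (by omega))
    subst hX
    exact ⟨dvd_vP_mul_of_notMem q hsub (dvd_vP_quadForm q hζ' hQ he' heq hqd hab hi),
      fun h => (q.isPrime.mem_or_mem h).resolve_left hsub⟩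
  obtain ⟨hvA, hmA⟩ := hfactor hA (by omega) (by omega) (by omega) h3
  obtain ⟨hvB, hmB⟩ := hfactor hB (by omega) (by omega) h3 (by omega)
  obtain ⟨hvC, hmC⟩ := hfactor hC (by omega) h3 (by omega) (by omega)
  subst hΔ hc₄
  exact dvd_vP_disc_and_vP_c4_eq_zero q hvA hvB hvC
    (fun h h' => hpair (by omega) (by omega) (by omega) (hmA h) (hmB h'))
    (fun h h' => hpair (by omega) (by omega) h3 (hmB h) (hmC h'))
    (fun h h' => hpair (by omega) h3 (by omega) (hmC h) (hmA h')) hq2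

/-- Theorem 3.7 of the paper: semistability of the Frey curve away from
`S_{K⁺,2rd}`, expressed via its discriminant `Δ` and invariant `c₄`. -/
theorem frey_curve_semistable_outside_S
    (K : Type*) [Field K] [NumberField K] (hK : TotallyReal K)
    (r : ℕ) (hr : r.Prime) (hr5 : 5 ≤ r)
    (p : ℕ) (hp : p.Prime) (hp5 : 5 ≤ p)
    (d : 𝓞 K) (hd0 : d ≠ 0)
    -- `L = K(ζ_r)` where `ζ` is a primitive `r`-th root of unity
    (L : Type*) [Field L] [NumberField L] [Algebra K L]
    (ζ : L) (hζ : IsPrimitiveRoot ζ r)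
    (hL : IntermediateField.adjoin K {ζ} = ⊤)
    -- `K⁺ = K(ζ_r + ζ_r⁻¹)`
    (Kp : IntermediateField K L)
    (hKp : Kp = IntermediateField.adjoin K {ζ + ζ⁻¹})
    -- `dp` is the image of `d` in `𝓞 K⁺`, and `e k` is `ζ^k + ζ^{−k}` as an element of `𝓞 K⁺`
    (dp : 𝓞 Kp) (hdp : ((dp : Kp) : L) = algebraMap K L (d : K))
    (e : ℕ → 𝓞 Kp) (he : ∀ k : ℕ, ((e k : Kp) : L) = ζ ^ k + ζ⁻¹ ^ k)
    -- `(a, b, c)` is a nontrivial primitive solution of `a^r + b^r = d·c^p` in `𝓞 K⁺`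
    (a b c : 𝓞 Kp)
    (heq : a ^ r + b ^ r = dp * c ^ p)
    (hnt : a * b * c ≠ 0)
    (hprim : Ideal.span {a, b, c} = ⊤)
    -- `0 ≤ k₁ < k₂ < k₃ ≤ (r−1)/2`
    (k₁ k₂ k₃ : ℕ) (h12 : k₁ < k₂) (h23 : k₂ < k₃) (h3 : k₃ ≤ (r - 1) / 2)
    -- `A = α·f_{k₁}(a,b)`, `B = β·f_{k₂}(a,b)`, `C = γ·f_{k₃}(a,b)`
    (A B C : 𝓞 Kp)
    (hA : A = (e k₃ - e k₂) * (a ^ 2 + e k₁ * a * b + b ^ 2))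
    (hB : B = (e k₁ - e k₃) * (a ^ 2 + e k₂ * a * b + b ^ 2))
    (hC : C = (e k₂ - e k₁) * (a ^ 2 + e k₃ * a * b + b ^ 2))
    -- `Δ` and `c₄` of the Frey curve `Y² = X(X − A)(X + B)`
    (Δ c₄ : 𝓞 Kp)
    (hΔ : Δ = 2 ^ 4 * (A * B * C) ^ 2)
    (hc₄ : c₄ = 2 ^ 4 * (A * B + B * C + C * A)) :
    ∀ q : HeightOneSpectrum (𝓞 Kp), 2 * (r : 𝓞 Kp) * dp ∉ q.asIdeal →
      (p : ℤ) ∣ vP q (Δ : Kp) ∧ (0 < vP q (Δ : Kp) → vP q (c₄ : Kp) = 0) :=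
  frey_curve_semistable_outside_S_general K r hr p L ζ hζ Kp dp e he a b c heq hprim k₁ k₂ k₃ h12
    h23 h3 A B C hA hB hC Δ c₄ hΔ hc₄
end

section
/- Let K be a totally real number field, r ≥ 5 a rational prime, d ∈ O_K \ {0} odd, K⁺ = K(ζ_r + ζ_r⁻¹), and let P be a prime ideal of O_{K⁺} lying above 2. Let p be a rational prime with p > 4·v_P(2), and let (a, b, c) ∈ O_{K⁺}³ be a nontrivial primitive solution of a^r + b^r = d·c^p with P | c. Choose 0 ≤ k₁ < k₂ < k₃ ≤ (r−1)/2 with P | f_{k₁}(a, b), and let A = α·f_{k₁}(a, b), B = β·f_{k₂}(a, b), C = γ·f_{k₃}(a, b) and j = 2⁸·(A·B + B·C + C·A)³ / (A·B·C)². Then v_P(j) < 0 and p ∤ v_P(j). -/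
open IsDedekindDomain NumberField

/-!
For odd `r = 2s + 1`, `a^r + b^r = (a + b) ∏_{k=1}^{s} f_k(a, b)`, and every difference
`(ζ^k + ζ^{-k}) - (ζ^{k'} + ζ^{-k'}) = ζ^{-k} (1 - ζ^{k-k'}) (1 - ζ^{k+k'})` divides `r²`, so it
is a unit at `P`. Primitivity and `P ∣ c` make `a` and `b` units at `P`, hence `f_{k₁}` is the
only one of `f_0 = (a + b)², f_1, …, f_s` divisible by `P`, and `v_P(f_{k₁})` is `p·v_P(c)` or
`2p·v_P(c)`. Then `v_P(A) = v_P(f_{k₁})` while `B`, `C` and `AB + BC + CA` are units at `P`,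
so `v_P(j) = 8·v_P(2) - 2·v_P(f_{k₁})`, which is negative and prime to `p` as `p > 4·v_P(2)`.
-/

section Ideal

variable {R : Type*} [CommRing R]

lemma Ideal.ne_zero_of_notMem {I : Ideal R} {x : R} (hx : x ∉ I) : x ≠ 0 := by
  rintro rfl
  exact hx I.zero_mem

lemma notMem_of_dvd_odd {I : Ideal R} (hI : I ≠ ⊤) (h2 : (2 : R) ∈ I) {m : ℕ} (hm : Odd m)
    {x : R} (hx : x ∣ m) : x ∉ I := by
  intro hxI
  obtain ⟨t, rfl⟩ := hm
  have hm : ((2 * t + 1 : ℕ) : R) ∈ I := I.mem_of_dvd hx hxI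
  refine hI ((Ideal.eq_top_iff_one I).2 ?_)
  rw [show (1 : R) = ((2 * t + 1 : ℕ) : R) - t * 2 by push_cast; ring]
  exact sub_mem hm (I.mul_mem_left _ h2)

variable {P : Ideal R} [P.IsPrime]

lemma left_notMem_of_pow_add_pow_eq {a b c u : R} {r p : ℕ} (hr : r ≠ 0) (hp : p ≠ 0)
    (h : a ^ r + b ^ r = u * c ^ p) (hprim : Ideal.span {a, b, c} = ⊤) (hc : c ∈ P) :
    a ∉ P := by
  intro ha
  have hb : b ∈ P := by
    refine ‹P.IsPrime›.mem_of_pow_mem r ?_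
    rw [show b ^ r = u * c ^ p - a ^ r by rw [← h]; ring]
    exact sub_mem (P.mul_mem_left _ (P.pow_mem_of_mem hc p (by omega)))
      (P.pow_mem_of_mem ha r (by omega))
  refine ‹P.IsPrime›.ne_top (top_le_iff.1 ?_)
  rw [← hprim, Ideal.span_le]
  rintro x (rfl | rfl | rfl) <;> assumption

lemma quadratic_notMem_of_sub_notMem {a b t t' : R} (ha : a ∉ P) (hb : b ∉ P)
    (ht' : a ^ 2 + t' * a * b + b ^ 2 ∈ P) (htt' : t - t' ∉ P) :
    a ^ 2 + t * a * b + b ^ 2 ∉ P := by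
  intro ht
  have hmem : (t - t') * (a * b) ∈ P := by
    rw [show (t - t') * (a * b)
      = (a ^ 2 + t * a * b + b ^ 2) - (a ^ 2 + t' * a * b + b ^ 2) by ring]
    exact sub_mem ht ht'
  exact ‹P.IsPrime›.mul_notMem htt' (‹P.IsPrime›.mul_notMem ha hb) hmem

end Ideal

section Valuation

variable {F : Type*} [Field F] [NumberField F] (P : HeightOneSpectrum (𝓞 F))

lemma vP_eq_neg_log (x : F) : vP P x = -WithZero.log (P.valuation F x) := by
  by_cases hx : x = 0
  · simp [vP, hx]
  · rw [vP, dif_neg hx, WithZero.toAdd_unzero_eq_log]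

lemma vP_div {x y : F} (hx : x ≠ 0) (hy : y ≠ 0) : vP P (x / y) = vP P x - vP P y := by
  rw [vP_eq_neg_log, vP_eq_neg_log, vP_eq_neg_log, map_div₀, WithZero.log_div
    ((Valuation.ne_zero_iff (P.valuation F)).2 hx) ((Valuation.ne_zero_iff (P.valuation F)).2 hy)]
  ring

lemma vP_coe_pos_of_mem {x : 𝓞 F} (hx : x ≠ 0) (hP : x ∈ P.asIdeal) : 0 < vP P (x : F) := by
  have h : P.valuation F x < 1 := (P.valuation_lt_one_iff_mem x).2 hP
  rw [vP_eq_neg_log, neg_pos,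
    WithZero.log_lt_iff_lt_exp ((Valuation.ne_zero_iff _).2 (by simpa using hx))]
  simpa using h

lemma vP_coe_eq_zero_of_notMem {x : 𝓞 F} (hP : x ∉ P.asIdeal) : vP P (x : F) = 0 := by
  rw [vP_eq_neg_log, (P.valuation_eq_one_iff_notMem).2 hP]
  simp

lemma vP_coe_mul_of_notMem {u x : 𝓞 F} (hu : u ∉ P.asIdeal) (hx : x ≠ 0) :
    vP P ((u * x : 𝓞 F) : F) = vP P (x : F) := by
  push_cast
  rw [vP_mul P (by simpa using Ideal.ne_zero_of_notMem hu) (by simpa using hx),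
    vP_coe_eq_zero_of_notMem P hu, zero_add]

lemma vP_coe_eq_of_mul_eq_mul {x y u z : 𝓞 F} (hy : y ∉ P.asIdeal) (hu : u ∉ P.asIdeal)
    (hz : z ≠ 0) (h : x * y = u * z) : vP P (x : F) = vP P (z : F) := by
  have hx : x ≠ 0 := by
    rintro rfl
    exact mul_ne_zero (Ideal.ne_zero_of_notMem hu) hz (by rw [← h, zero_mul])
  rw [← vP_coe_mul_of_notMem P hy hx, mul_comm, h, vP_coe_mul_of_notMem P hu hz]

lemma vP_frey_jInvariant {A B C : 𝓞 F} (hA0 : A ≠ 0) (hA : A ∈ P.asIdeal)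
    (hB : B ∉ P.asIdeal) (hC : C ∉ P.asIdeal) :
    vP P (2 ^ 8 * ((A * B + B * C + C * A : 𝓞 F) : F) ^ 3 / ((A * B * C : 𝓞 F) : F) ^ 2)
      = 8 * vP P 2 - 2 * vP P (A : F) := by
  have hBC : B * C ∉ P.asIdeal := P.isPrime.mul_notMem hB hC
  have hS : A * B + B * C + C * A ∉ P.asIdeal := fun hS => hBC <| by
    rw [show B * C = (A * B + B * C + C * A) - A * (B + C) by ring]
    exact sub_mem hS (Ideal.mul_mem_right _ _ hA)
  have hS0 : ((A * B + B * C + C * A : 𝓞 F) : F) ≠ 0 :=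
    RingOfIntegers.coe_ne_zero_iff.2 (Ideal.ne_zero_of_notMem hS)
  have hT0 : ((A * B * C : 𝓞 F) : F) ≠ 0 := RingOfIntegers.coe_ne_zero_iff.2 <|
    mul_ne_zero (mul_ne_zero hA0 (Ideal.ne_zero_of_notMem hB)) (Ideal.ne_zero_of_notMem hC)
  have hT : vP P ((A * B * C : 𝓞 F) : F) = vP P (A : F) := by
    rw [show A * B * C = B * C * A by ring, vP_coe_mul_of_notMem P hBC hA0]
  have h2 : (2 : F) ^ 8 ≠ 0 := pow_ne_zero _ two_ne_zero
  rw [vP_div P (mul_ne_zero h2 (pow_ne_zero 3 hS0)) (pow_ne_zero 2 hT0),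
    vP_mul P h2 (pow_ne_zero 3 hS0),
    vP_pow, vP_pow, vP_pow, vP_coe_eq_zero_of_notMem P hS, hT]
  push_cast
  ring

lemma vP_quadratic_eq_mul_of_prod_eq {a b c u : 𝓞 F} {e : ℕ → 𝓞 F} {s k₀ p : ℕ}
    (he0 : e 0 = 2)
    (hfac : (a + b) * ∏ k ∈ Finset.Ico 1 (s + 1), (a ^ 2 + e k * a * b + b ^ 2) = u * c ^ p)
    (hu : u ∉ P.asIdeal) (hc : c ≠ 0) (hk₀ : k₀ ≤ s)
    (hother : ∀ k ≤ s, k ≠ k₀ → a ^ 2 + e k * a * b + b ^ 2 ∉ P.asIdeal) :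
    a ^ 2 + e k₀ * a * b + b ^ 2 ≠ 0 ∧
      ∃ t : ℤ, vP P (c : F) ≤ t ∧ vP P ((a ^ 2 + e k₀ * a * b + b ^ 2 : 𝓞 F) : F) = p * t := by
  have hne : (a + b) * ∏ k ∈ Finset.Ico 1 (s + 1), (a ^ 2 + e k * a * b + b ^ 2) ≠ 0 :=
    hfac ▸ mul_ne_zero (Ideal.ne_zero_of_notMem hu) (pow_ne_zero p hc)
  have hvc : 0 ≤ vP P (c : F) := by
    by_cases hcP : c ∈ P.asIdeal
    · exact (vP_coe_pos_of_mem P hc hcP).le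
    · exact (vP_coe_eq_zero_of_notMem P hcP).ge
  have hsq : a ^ 2 + e 0 * a * b + b ^ 2 = (a + b) ^ 2 := by rw [he0]; ring
  rcases Nat.eq_zero_or_pos k₀ with rfl | hk₀
  · have hprod : ∏ k ∈ Finset.Ico 1 (s + 1), (a ^ 2 + e k * a * b + b ^ 2) ∉ P.asIdeal := by
      rw [Ideal.IsPrime.prod_mem_iff]
      push Not
      intro k hk
      rw [Finset.mem_Ico] at hk
      exact hother k (by omega) (by omega)
    have hab := vP_coe_eq_of_mul_eq_mul P hprod hu (pow_ne_zero p hc) hfac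
    refine ⟨hsq ▸ pow_ne_zero 2 (left_ne_zero_of_mul hne), 2 * vP P (c : F), by omega, ?_⟩
    rw [hsq]
    push_cast at hab ⊢
    rw [vP_pow, hab, vP_pow]
    ring
  · have hmem : k₀ ∈ Finset.Ico 1 (s + 1) := Finset.mem_Ico.2 ⟨hk₀, by omega⟩
    have hab : a + b ∉ P.asIdeal := fun h => hother 0 (Nat.zero_le _) hk₀.ne
      (hsq ▸ P.asIdeal.pow_mem_of_mem h 2 two_pos)
    refine ⟨Finset.prod_ne_zero_iff.1 (right_ne_zero_of_mul hne) k₀ hmem, vP P (c : F), le_rfl, ?_⟩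
    rw [← Finset.mul_prod_erase _ _ hmem] at hfac
    have hrest : (a + b) * ∏ k ∈ (Finset.Ico 1 (s + 1)).erase k₀, (a ^ 2 + e k * a * b + b ^ 2)
        ∉ P.asIdeal := by
      refine P.isPrime.mul_notMem hab ?_
      rw [Ideal.IsPrime.prod_mem_iff]
      push Not
      intro k hk
      simp only [Finset.mem_erase, Finset.mem_Ico] at hk
      exact hother k (by omega) hk.1
    rw [vP_coe_eq_of_mul_eq_mul P hrest hu (pow_ne_zero p hc) (by rw [← hfac]; ring)]
    push_cast
    rw [vP_pow]

end Valuation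

section Cyclotomic

open Finset Polynomial

variable {L : Type*} [Field L] {n : ℕ} {ζ : L}

lemma IsPrimitiveRoot.prod_nthRootsFinset_one {M : Type*} [CommMonoid M] (hζ : IsPrimitiveRoot ζ n)
    (f : L → M) : ∏ x ∈ nthRootsFinset n (1 : L), f x = ∏ i ∈ range n, f (ζ ^ i) := by
  classical
  have himage : nthRootsFinset n (1 : L) = (range n).image (ζ ^ ·) := by
    rcases n.eq_zero_or_pos with rfl | hn
    · simp
    have : NeZero n := ⟨hn.ne'⟩
    ext x
    simp only [Polynomial.mem_nthRootsFinset hn, mem_image, mem_range]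
    constructor
    · intro hx
      exact hζ.eq_pow_of_pow_eq_one hx
    · rintro ⟨i, -, rfl⟩
      rw [pow_right_comm, hζ.pow_eq_one, one_pow]
  rw [himage, prod_image fun i hi j hj h => hζ.injOn_pow hi hj h]

lemma IsPrimitiveRoot.prod_one_sub_pow (hζ : IsPrimitiveRoot ζ n) (hn : 0 < n) :
    ∏ i ∈ Ico 1 n, (1 - ζ ^ i) = n := by
  have hprod : (X ^ n - 1 : L[X]) = (X - 1) * ∏ i ∈ Ico 1 n, (X - C (ζ ^ i)) := by
    rw [X_pow_sub_one_eq_prod hn hζ, hζ.prod_nthRootsFinset_one, range_eq_Ico,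
      prod_eq_prod_Ico_succ_bot hn]
    simp
  have hgeom : (X ^ n - 1 : L[X]) = (X - 1) * ∑ i ∈ range n, X ^ i := by
    rw [mul_comm, geom_sum_mul]
  have h := congrArg (eval 1) (mul_left_cancel₀ (X_sub_C_ne_zero 1) (hprod.symm.trans hgeom))
  simpa [eval_prod, eval_finsetSum] using h

lemma IsPrimitiveRoot.exists_isIntegral_one_sub_pow_mul_eq (hζ : IsPrimitiveRoot ζ n) {m : ℕ}
    (hm : 0 < m) (hmn : m < n) : ∃ w : L, IsIntegral ℤ w ∧ (1 - ζ ^ m) * w = n := by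
  have hint := hζ.isIntegral (by omega)
  refine ⟨∏ i ∈ (Ico 1 n).erase m, (1 - ζ ^ i), ?_, ?_⟩
  · exact IsIntegral.prod _ fun i _ => isIntegral_one.sub (hint.pow i)
  · rw [mul_prod_erase _ (fun i => 1 - ζ ^ i) (mem_Ico.2 ⟨hm, hmn⟩), hζ.prod_one_sub_pow (by omega)]

lemma IsPrimitiveRoot.exists_isIntegral_add_inv_pow_sub_mul_eq (hζ : IsPrimitiveRoot ζ n)
    {k k' : ℕ} (hk : k' < k) (hkn : k + k' < n) :
    ∃ w : L, IsIntegral ℤ w ∧ ((ζ ^ k + ζ⁻¹ ^ k) - (ζ ^ k' + ζ⁻¹ ^ k')) * w = n ^ 2 := by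
  obtain ⟨w₁, hw₁, h₁⟩ :=
    hζ.exists_isIntegral_one_sub_pow_mul_eq (m := k - k') (by omega) (by omega)
  obtain ⟨w₂, hw₂, h₂⟩ :=
    hζ.exists_isIntegral_one_sub_pow_mul_eq (m := k + k') (by omega) (by omega)
  refine ⟨ζ ^ k * w₁ * w₂, ((hζ.isIntegral (by omega)).pow k).mul hw₁ |>.mul hw₂, ?_⟩
  have hζ0 : ζ ≠ 0 := hζ.ne_zero (by omega)
  have hfactor : ((ζ ^ k + ζ⁻¹ ^ k) - (ζ ^ k' + ζ⁻¹ ^ k')) * ζ ^ k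
      = (1 - ζ ^ (k - k')) * (1 - ζ ^ (k + k')) := by
    have hu : ζ ^ (k - k') ≠ 0 := pow_ne_zero _ hζ0
    have hv : ζ ^ k' ≠ 0 := pow_ne_zero _ hζ0
    rw [inv_pow, inv_pow,
      show ζ ^ k = ζ ^ (k - k') * ζ ^ k' by rw [← pow_add, Nat.sub_add_cancel hk.le],
      show ζ ^ (k + k') = ζ ^ (k - k') * ζ ^ k' * ζ ^ k' by
        rw [← pow_add, ← pow_add, Nat.sub_add_cancel hk.le]]
    field_simp
    ring
  linear_combination w₁ * w₂ * hfactor + (1 - ζ ^ (k + k')) * w₂ * h₁ + (n : L) * h₂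

lemma IsPrimitiveRoot.pow_add_pow_eq_mul_prod (hζ : IsPrimitiveRoot ζ n) {s : ℕ}
    (hs : n = 2 * s + 1) (x y : L) :
    x ^ n + y ^ n = (x + y) * ∏ k ∈ Ico 1 (s + 1), (x ^ 2 + (ζ ^ k + ζ⁻¹ ^ k) * x * y + y ^ 2) := by
  have hζ0 : ζ ≠ 0 := hζ.ne_zero (by omega)
  rw [hζ.pow_add_pow_eq_prod_add_mul x y ⟨s, hs⟩, hζ.prod_nthRootsFinset_one, range_eq_Ico,
    prod_eq_prod_Ico_succ_bot (by omega), ← prod_Ico_consecutive _ (by omega : 1 ≤ s + 1)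
      (by omega : s + 1 ≤ n)]
  have hreflect :
      ∏ i ∈ Ico (s + 1) n, (x + ζ ^ i * y) = ∏ k ∈ Ico 1 (s + 1), (x + ζ ^ (n - k) * y) := by
    rw [prod_Ico_reflect (fun i => x + ζ ^ i * y) 1 (by omega : s + 1 ≤ n + 1),
      show n + 1 - (s + 1) = s + 1 by omega, Nat.add_sub_cancel]
  rw [hreflect, ← prod_mul_distrib, pow_zero, one_mul]
  congr 1
  refine prod_congr rfl fun k hk => ?_
  rw [pow_sub₀ ζ hζ0 (by rw [mem_Ico] at hk; omega), hζ.pow_eq_one, one_mul, inv_pow]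
  have := pow_ne_zero k hζ0
  field_simp
  ring

end Cyclotomic

section Transfer

variable {F L : Type*} [Field F] [Field L] [Algebra F L]

lemma NumberField.RingOfIntegers.dvd_of_algebraMap_mul_eq {x y : 𝓞 F} {w : L}
    (hw : IsIntegral ℤ w) (h : algebraMap F L x * w = algebraMap F L y) : x ∣ y := by
  by_cases hx : x = 0
  · subst hx
    have : (y : F) = 0 := (algebraMap F L).injective (by simpa using h.symm)
    simp [RingOfIntegers.coe_eq_zero_iff.1 this]
  have hx' : (x : F) ≠ 0 := RingOfIntegers.coe_ne_zero_iff.2 hx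
  have hq : algebraMap F L ((y : F) / x) = w := by
    rw [map_div₀, ← h, mul_div_cancel_left₀ _ ((map_ne_zero (algebraMap F L)).2 hx')]
  refine ⟨⟨(y : F) / x, (isIntegral_algebraMap_iff (algebraMap F L).injective).1 (hq ▸ hw)⟩, ?_⟩
  apply RingOfIntegers.ext
  exact (mul_div_cancel₀ _ hx').symm

variable {n : ℕ} {ζ : L} {e : ℕ → 𝓞 F}

lemma sub_dvd_sq_of_isPrimitiveRoot (hζ : IsPrimitiveRoot ζ n)
    (he : ∀ k, algebraMap F L (e k) = ζ ^ k + ζ⁻¹ ^ k) {k k' : ℕ} (hk : k' < k)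
    (hkn : k + k' < n) : e k - e k' ∣ (n : 𝓞 F) ^ 2 := by
  obtain ⟨w, hw, h⟩ := hζ.exists_isIntegral_add_inv_pow_sub_mul_eq hk hkn
  exact RingOfIntegers.dvd_of_algebraMap_mul_eq hw (by simpa [he] using h)

lemma pow_add_pow_eq_mul_prod_of_isPrimitiveRoot (hζ : IsPrimitiveRoot ζ n)
    (he : ∀ k, algebraMap F L (e k) = ζ ^ k + ζ⁻¹ ^ k) {s : ℕ} (hs : n = 2 * s + 1)
    (a b : 𝓞 F) :
    a ^ n + b ^ n = (a + b) * ∏ k ∈ Finset.Ico 1 (s + 1), (a ^ 2 + e k * a * b + b ^ 2) := by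
  ext
  apply (algebraMap F L).injective
  simpa [he] using hζ.pow_add_pow_eq_mul_prod hs (algebraMap F L a) (algebraMap F L b)

lemma sub_notMem_of_isPrimitiveRoot (hζ : IsPrimitiveRoot ζ n)
    (he : ∀ k, algebraMap F L (e k) = ζ ^ k + ζ⁻¹ ^ k) {s : ℕ} (hs : n = 2 * s + 1)
    {I : Ideal (𝓞 F)} (hI : I ≠ ⊤) (h2 : (2 : 𝓞 F) ∈ I) {k k' : ℕ} (hk : k ≤ s) (hk' : k' ≤ s)
    (hne : k ≠ k') : e k - e k' ∉ I := by
  wlog hlt : k' < k generalizing k k'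
  · rw [← neg_sub, neg_mem_iff]
    exact this hk' hk hne.symm (by omega)
  exact notMem_of_dvd_odd hI h2 (Odd.pow ⟨s, hs⟩)
    (by exact_mod_cast sub_dvd_sq_of_isPrimitiveRoot hζ he hlt (by omega))

lemma apply_zero_eq_two_of_isPrimitiveRoot (he : ∀ k, algebraMap F L (e k) = ζ ^ k + ζ⁻¹ ^ k) :
    e 0 = 2 :=
  RingOfIntegers.ext <| (algebraMap F L).injective <| by
    rw [he, RingOfIntegers.coe_eq_algebraMap, map_ofNat, map_ofNat]
    norm_num

end Transfer


lemma algebraMap_notMem_of_forall_two_mem {K F : Type*} [Field K] [NumberField K] [Field F]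
    [Algebra K F] {d : 𝓞 K}
    (hd : ∀ Q : HeightOneSpectrum (𝓞 K), (2 : 𝓞 K) ∈ Q.asIdeal → d ∉ Q.asIdeal)
    {P : Ideal (𝓞 F)} [P.IsPrime] (hP2 : (2 : 𝓞 F) ∈ P) : algebraMap (𝓞 K) (𝓞 F) d ∉ P := by
  have h2 : (2 : 𝓞 K) ∈ P.comap (algebraMap (𝓞 K) (𝓞 F)) := by
    rwa [Ideal.mem_comap, map_ofNat]
  have hne : P.comap (algebraMap (𝓞 K) (𝓞 F)) ≠ ⊥ := by
    intro h
    simp [h] at h2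
  exact hd ⟨_, inferInstance, hne⟩ h2

lemma eight_mul_sub_neg_and_not_dvd {p : ℕ} (hp : p.Prime) {n t : ℤ} (hn : 0 < n)
    (hnp : 4 * n < p) (ht : 1 ≤ t) :
    8 * n - 2 * (p * t) < 0 ∧ ¬ (p : ℤ) ∣ 8 * n - 2 * (p * t) := by
  refine ⟨by nlinarith, fun h => ?_⟩
  have h8n : (p : ℤ) ∣ 8 * n := by
    have := dvd_add h (dvd_mul_of_dvd_right (dvd_mul_right (p : ℤ) t) 2)
    rwa [sub_add_cancel] at this
  rcases (Nat.prime_iff_prime_int.mp hp).dvd_or_dvd h8n with h8 | hpn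
  · have : p ∣ 2 := hp.dvd_of_dvd_pow (n := 3) (by exact_mod_cast h8)
    have := Nat.le_of_dvd two_pos this
    omega
  · have := Int.le_of_dvd hn hpn
    omega

theorem frey_jinvariant_valuation_at_2_general
    (K : Type*) [Field K] [NumberField K]
    (r : ℕ) (hr : r.Prime)
    (d : 𝓞 K)
    -- `d` is odd: no prime of `K` above `2` divides `d`
    (hdodd : ∀ Q : HeightOneSpectrum (𝓞 K), (2 : 𝓞 K) ∈ Q.asIdeal → d ∉ Q.asIdeal)
    -- `L = K(ζ_r)` where `ζ` is a primitive `r`-th root of unity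
    (L : Type*) [Field L] [NumberField L] [Algebra K L]
    (ζ : L) (hζ : IsPrimitiveRoot ζ r)
    -- `K⁺ = K(ζ_r + ζ_r⁻¹)`
    (Kp : IntermediateField K L)
    -- `dp` is the image of `d` in `𝓞 K⁺`, and `e k` is `ζ^k + ζ^{−k}` as an element of `𝓞 K⁺`
    (dp : 𝓞 Kp) (hdp : ((dp : Kp) : L) = algebraMap K L (d : K))
    (e : ℕ → 𝓞 Kp) (he : ∀ k : ℕ, ((e k : Kp) : L) = ζ ^ k + ζ⁻¹ ^ k)
    -- `P` is a prime of `K⁺` lying above `2`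
    (P : HeightOneSpectrum (𝓞 Kp)) (hP2 : (2 : 𝓞 Kp) ∈ P.asIdeal)
    -- `p` is a rational prime with `p > 4·v_P(2)`
    (p : ℕ) (hp : p.Prime) (hp4 : 4 * vP P (2 : Kp) < (p : ℤ))
    -- `(a, b, c)` is a nontrivial primitive solution of `a^r + b^r = d·c^p` with `P ∣ c`
    (a b c : 𝓞 Kp)
    (heq : a ^ r + b ^ r = dp * c ^ p)
    (hnt : a * b * c ≠ 0)
    (hprim : Ideal.span {a, b, c} = ⊤)
    (hPc : c ∈ P.asIdeal)
    -- `0 ≤ k₁ < k₂ < k₃ ≤ (r−1)/2` with `P ∣ f_{k₁}(a, b)`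
    (k₁ k₂ k₃ : ℕ) (h12 : k₁ < k₂) (h23 : k₂ < k₃) (h3 : k₃ ≤ (r - 1) / 2)
    (hPf : a ^ 2 + e k₁ * a * b + b ^ 2 ∈ P.asIdeal)
    -- `A = α·f_{k₁}(a,b)`, `B = β·f_{k₂}(a,b)`, `C = γ·f_{k₃}(a,b)`
    (A B C : 𝓞 Kp)
    (hA : A = (e k₃ - e k₂) * (a ^ 2 + e k₁ * a * b + b ^ 2))
    (hB : B = (e k₁ - e k₃) * (a ^ 2 + e k₂ * a * b + b ^ 2))
    (hC : C = (e k₂ - e k₁) * (a ^ 2 + e k₃ * a * b + b ^ 2))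
    -- `j` is the `j`-invariant of the Frey curve `Y² = X(X − A)(X + B)`
    (j : Kp)
    (hj : j = 2 ^ 8 * ((A * B + B * C + C * A : 𝓞 Kp) : Kp) ^ 3 /
      ((A * B * C : 𝓞 Kp) : Kp) ^ 2) :
    vP P j < 0 ∧ ¬ (p : ℤ) ∣ vP P j := by
  obtain ⟨s, hs⟩ := hr.odd_of_ne_two (by omega)
  have he' : ∀ k, algebraMap Kp L (e k) = ζ ^ k + ζ⁻¹ ^ k := he
  have hsub : ∀ {k k'}, k ≤ s → k' ≤ s → k ≠ k' → e k - e k' ∉ P.asIdeal :=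
    sub_notMem_of_isPrimitiveRoot hζ he' hs P.isPrime.ne_top hP2
  have hc0 : c ≠ 0 := right_ne_zero_of_mul hnt
  have ha : a ∉ P.asIdeal := left_notMem_of_pow_add_pow_eq hr.ne_zero hp.ne_zero heq hprim hPc
  have hb : b ∉ P.asIdeal := left_notMem_of_pow_add_pow_eq hr.ne_zero hp.ne_zero
    ((add_comm _ _).trans heq) (by rw [Set.insert_comm, hprim]) hPc
  have hdp' : dp ∉ P.asIdeal := by
    have : dp = algebraMap (𝓞 K) (𝓞 Kp) d := RingOfIntegers.ext <| (algebraMap Kp L).injective <|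
      hdp.trans (IsScalarTower.algebraMap_apply K Kp L _)
    exact this ▸ algebraMap_notMem_of_forall_two_mem hdodd hP2
  have hother : ∀ k ≤ s, k ≠ k₁ → a ^ 2 + e k * a * b + b ^ 2 ∉ P.asIdeal := fun k hk hne =>
    quadratic_notMem_of_sub_notMem ha hb hPf (hsub hk (by omega) hne)
  obtain ⟨hf0, t, hct, hft⟩ := vP_quadratic_eq_mul_of_prod_eq P
    (apply_zero_eq_two_of_isPrimitiveRoot he')
    ((pow_add_pow_eq_mul_prod_of_isPrimitiveRoot hζ he' hs a b).symm.trans heq) hdp' hc0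
    (by omega) hother
  have hα : e k₃ - e k₂ ∉ P.asIdeal := hsub (by omega) (by omega) (by omega)
  have hB' : B ∉ P.asIdeal := hB ▸ P.isPrime.mul_notMem (hsub (by omega) (by omega) (by omega))
    (hother k₂ (by omega) (by omega))
  have hC' : C ∉ P.asIdeal := hC ▸ P.isPrime.mul_notMem (hsub (by omega) (by omega) (by omega))
    (hother k₃ (by omega) (by omega))
  have h2 : 0 < vP P (2 : Kp) := by
    simpa only [RingOfIntegers.coe_eq_algebraMap, map_ofNat] using
      vP_coe_pos_of_mem P two_ne_zero hP2
  rw [hj, vP_frey_jInvariant P (hA ▸ mul_ne_zero (Ideal.ne_zero_of_notMem hα) hf0)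
    (hA ▸ P.asIdeal.mul_mem_left _ hPf) hB' hC', hA, vP_coe_mul_of_notMem P hα hf0, hft]
  exact eight_mul_sub_neg_and_not_dvd hp h2 hp4 (hct.trans' (vP_coe_pos_of_mem P hc0 hPc))

/-- Lemma 3.13 of the paper. -/
theorem frey_jinvariant_valuation_at_2
    (K : Type*) [Field K] [NumberField K] (hK : TotallyReal K)
    (r : ℕ) (hr : r.Prime) (hr5 : 5 ≤ r)
    (d : 𝓞 K) (hd0 : d ≠ 0)
    -- `d` is odd: no prime of `K` above `2` divides `d`
    (hdodd : ∀ Q : HeightOneSpectrum (𝓞 K), (2 : 𝓞 K) ∈ Q.asIdeal → d ∉ Q.asIdeal)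
    -- `L = K(ζ_r)` where `ζ` is a primitive `r`-th root of unity
    (L : Type*) [Field L] [NumberField L] [Algebra K L]
    (ζ : L) (hζ : IsPrimitiveRoot ζ r)
    (hL : IntermediateField.adjoin K {ζ} = ⊤)
    -- `K⁺ = K(ζ_r + ζ_r⁻¹)`
    (Kp : IntermediateField K L)
    (hKp : Kp = IntermediateField.adjoin K {ζ + ζ⁻¹})
    -- `dp` is the image of `d` in `𝓞 K⁺`, and `e k` is `ζ^k + ζ^{−k}` as an element of `𝓞 K⁺`
    (dp : 𝓞 Kp) (hdp : ((dp : Kp) : L) = algebraMap K L (d : K))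
    (e : ℕ → 𝓞 Kp) (he : ∀ k : ℕ, ((e k : Kp) : L) = ζ ^ k + ζ⁻¹ ^ k)
    -- `P` is a prime of `K⁺` lying above `2`
    (P : HeightOneSpectrum (𝓞 Kp)) (hP2 : (2 : 𝓞 Kp) ∈ P.asIdeal)
    -- `p` is a rational prime with `p > 4·v_P(2)`
    (p : ℕ) (hp : p.Prime) (hp4 : 4 * vP P (2 : Kp) < (p : ℤ))
    -- `(a, b, c)` is a nontrivial primitive solution of `a^r + b^r = d·c^p` with `P ∣ c`
    (a b c : 𝓞 Kp)
    (heq : a ^ r + b ^ r = dp * c ^ p)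
    (hnt : a * b * c ≠ 0)
    (hprim : Ideal.span {a, b, c} = ⊤)
    (hPc : c ∈ P.asIdeal)
    -- `0 ≤ k₁ < k₂ < k₃ ≤ (r−1)/2` with `P ∣ f_{k₁}(a, b)`
    (k₁ k₂ k₃ : ℕ) (h12 : k₁ < k₂) (h23 : k₂ < k₃) (h3 : k₃ ≤ (r - 1) / 2)
    (hPf : a ^ 2 + e k₁ * a * b + b ^ 2 ∈ P.asIdeal)
    -- `A = α·f_{k₁}(a,b)`, `B = β·f_{k₂}(a,b)`, `C = γ·f_{k₃}(a,b)`
    (A B C : 𝓞 Kp)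
    (hA : A = (e k₃ - e k₂) * (a ^ 2 + e k₁ * a * b + b ^ 2))
    (hB : B = (e k₁ - e k₃) * (a ^ 2 + e k₂ * a * b + b ^ 2))
    (hC : C = (e k₂ - e k₁) * (a ^ 2 + e k₃ * a * b + b ^ 2))
    -- `j` is the `j`-invariant of the Frey curve `Y² = X(X − A)(X + B)`
    (j : Kp)
    (hj : j = 2 ^ 8 * ((A * B + B * C + C * A : 𝓞 Kp) : Kp) ^ 3 /
      ((A * B * C : 𝓞 Kp) : Kp) ^ 2) :
    vP P j < 0 ∧ ¬ (p : ℤ) ∣ vP P j :=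
  frey_jinvariant_valuation_at_2_general K r hr d hdodd L ζ hζ Kp dp hdp e he P hP2 p hp hp4 a b c
    heq hnt hprim hPc k₁ k₂ k₃ h12 h23 h3 hPf A B C hA hB hC j hj
end
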